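/- A point x* ∈ ℝⁿ is a stationary point of ψ = f + φ (i.e. 0 ∈ ∂ψ(x*)) if and only if there exists z* with x* = prox_φ^Λ(z*) and F_nor^Λ(z*) = 0, where F_nor^Λ(z) = ∇f(prox_φ^Λ(z)) + Λ(z − prox_φ^Λ(z)). -/

import Mathlib

/-!
The proximal point `p = prox z` minimises `φ y + ½⟪y - z, Λ (y - z)⟫`; perturbing `p` along the
segment towards any `y` and letting the step go to zero shows that `Λ (z - p)` is a subgradient
of `φ` at `p`. Conversely, by monotonicity of `∂φ` and positive definiteness of `Λ`, a point `x`
with `Λ (z - x) ∈ ∂φ x` must equal `prox z`. Hence `0 ∈ ∇f x + ∂φ x` holds exactly when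
`x = prox z` for the `z` with `Λ (z - x) = -∇f x`, and this is the equation `F_nor(z) = 0`.
-/

open scoped RealInnerProductSpace

/-- The convex subdifferential of a real-valued function. -/
def subdiff {n : ℕ} (φ : EuclideanSpace ℝ (Fin n) → ℝ) (x : EuclideanSpace ℝ (Fin n)) :
    Set (EuclideanSpace ℝ (Fin n)) :=
  {v | ∀ y, φ x + ⟪v, y - x⟫ ≤ φ y}

open Filter Topology

lemma nonneg_of_forall_mem_Ioc_nonneg_add_mul {a b : ℝ}
    (h : ∀ t ∈ Set.Ioc (0 : ℝ) 1, 0 ≤ a + t * b) : 0 ≤ a := by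
  have hlim : Tendsto (fun t : ℝ => a + t * b) (𝓝[>] 0) (𝓝 a) := by
    have := (continuous_const.add (continuous_id.mul continuous_const)).tendsto (0 : ℝ)
      (f := fun t : ℝ => a + t * b)
    simpa using this.mono_left nhdsWithin_le_nhds
  exact ge_of_tendsto hlim (eventually_of_mem (Ioc_mem_nhdsGT one_pos) h)

section InnerProductSpace

variable {E : Type*} [NormedAddCommGroup E] [InnerProductSpace ℝ E] {L : E →ₗ[ℝ] E}

lemma LinearMap.IsSymmetric.inner_add_smul_apply_add_smul (hL : L.IsSymmetric) (w d : E)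
    (t : ℝ) :
    ⟪w + t • d, L (w + t • d)⟫ = ⟪w, L w⟫ + 2 * t * ⟪w, L d⟫ + t ^ 2 * ⟪d, L d⟫ := by
  have hdw : ⟪d, L w⟫ = ⟪w, L d⟫ := by rw [← hL, real_inner_comm]
  simp only [map_add, map_smul, inner_add_left, inner_add_right, real_inner_smul_left,
    real_inner_smul_right, hdw]
  ring

lemma LinearMap.injective_of_inner_apply_self_pos (hL : ∀ u ≠ 0, 0 < ⟪u, L u⟫) :
    Function.Injective L := by
  refine (injective_iff_map_eq_zero L).mpr fun u hu => ?_
  by_contra hne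
  simpa [hu] using hL u hne

end InnerProductSpace

lemma Matrix.PosDef.inner_toEuclideanLin_self_pos {ι : Type*} [Fintype ι] [DecidableEq ι]
    {Λ : Matrix ι ι ℝ} (hΛ : Λ.PosDef) (u : EuclideanSpace ℝ ι) (hu : u ≠ 0) :
    0 < ⟪u, Λ.toEuclideanLin u⟫ := by
  have h := hΛ.dotProduct_mulVec_pos (x := WithLp.ofLp u) (by simpa using hu)
  simpa [Matrix.toLpLin_apply, PiLp.inner_apply, dotProduct, mul_comm] using h

section Subdifferential

variable {n : ℕ} {φ : EuclideanSpace ℝ (Fin n) → ℝ}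

lemma subdiff_monotone {x y v w : EuclideanSpace ℝ (Fin n)} (hv : v ∈ subdiff φ x)
    (hw : w ∈ subdiff φ y) : 0 ≤ ⟪v - w, x - y⟫ := by
  have hvy := hv y
  have hwx := hw x
  rw [← neg_sub x y, inner_neg_right] at hvy
  rw [inner_sub_left]
  linarith

variable {L : EuclideanSpace ℝ (Fin n) →ₗ[ℝ] EuclideanSpace ℝ (Fin n)}

lemma eq_of_apply_sub_mem_subdiff (hL : ∀ u ≠ 0, 0 < ⟪u, L u⟫) {z x y : EuclideanSpace ℝ (Fin n)}
    (hx : L (z - x) ∈ subdiff φ x) (hy : L (z - y) ∈ subdiff φ y) : x = y := by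
  by_contra hne
  have hmono := subdiff_monotone hx hy
  rw [← map_sub, sub_sub_sub_cancel_left, ← neg_sub x y, map_neg, inner_neg_left,
    real_inner_comm] at hmono
  linarith [hL (x - y) (sub_ne_zero.mpr hne)]

lemma apply_sub_mem_subdiff_of_minimizes (hφ : ConvexOn ℝ Set.univ φ) (hL : L.IsSymmetric)
    {z p : EuclideanSpace ℝ (Fin n)}
    (hmin : ∀ y, φ p + (1 / 2) * ⟪p - z, L (p - z)⟫ ≤ φ y + (1 / 2) * ⟪y - z, L (y - z)⟫) :
    L (z - p) ∈ subdiff φ p := by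
  intro y
  have hdescent : ∀ t ∈ Set.Ioc (0 : ℝ) 1,
      0 ≤ (φ y - φ p + ⟪p - z, L (y - p)⟫) + t * ((1 / 2) * ⟪y - p, L (y - p)⟫) := by
    rintro t ⟨ht0, ht1⟩
    have hconv := hφ.2 (Set.mem_univ p) (Set.mem_univ y) (sub_nonneg.mpr ht1) ht0.le
      (sub_add_cancel 1 t)
    have hcompare := hmin (p + t • (y - p))
    rw [add_sub_right_comm, hL.inner_add_smul_apply_add_smul,
      show p + t • (y - p) = (1 - t) • p + t • y by module] at hcompare
    simp only [smul_eq_mul] at hconv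
    have : 0 ≤ t * ((φ y - φ p + ⟪p - z, L (y - p)⟫) + t * ((1 / 2) * ⟪y - p, L (y - p)⟫)) := by
      linear_combination hconv + hcompare
    exact nonneg_of_mul_nonneg_right this ht0
  have hfirst := nonneg_of_forall_mem_Ioc_nonneg_add_mul hdescent
  rw [← neg_sub z p, inner_neg_left] at hfirst
  rw [hL (z - p) (y - p)]
  linarith

end Subdifferential

theorem stationary_iff_normal_map_zero_general {n : ℕ}
    (f φ : EuclideanSpace ℝ (Fin n) → ℝ)
    (hφ : ConvexOn ℝ Set.univ φ)
    (Λ : Matrix (Fin n) (Fin n) ℝ) (hΛ : Λ.PosDef)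
    (prox : EuclideanSpace ℝ (Fin n) → EuclideanSpace ℝ (Fin n))
    (hprox : ∀ z y, φ (prox z) +
        (1 / 2) * ⟪prox z - z, Matrix.toEuclideanLin Λ (prox z - z)⟫ ≤
      φ y + (1 / 2) * ⟪y - z, Matrix.toEuclideanLin Λ (y - z)⟫)
    (x : EuclideanSpace ℝ (Fin n)) :
    (0 : EuclideanSpace ℝ (Fin n)) ∈ (fun v => gradient f x + v) '' subdiff φ x ↔
      ∃ z, x = prox z ∧
        gradient f (prox z) + Matrix.toEuclideanLin Λ (z - prox z) = 0 := by
  set L := Matrix.toEuclideanLin Λ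
  have hLpos : ∀ u ≠ 0, 0 < ⟪u, L u⟫ := hΛ.inner_toEuclideanLin_self_pos
  have hprox_opt : ∀ z, L (z - prox z) ∈ subdiff φ (prox z) := fun z =>
    apply_sub_mem_subdiff_of_minimizes hφ
      (Matrix.isSymmetric_toEuclideanLin_iff.mpr hΛ.isHermitian) (hprox z)
  constructor
  · rintro ⟨v, hv, hstat⟩
    obtain ⟨w, rfl⟩ :=
      LinearMap.injective_iff_surjective.mp (LinearMap.injective_of_inner_apply_self_pos hLpos) v
    have hx : x = prox (x + w) :=
      eq_of_apply_sub_mem_subdiff hLpos (by rwa [add_sub_cancel_left]) (hprox_opt (x + w))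
    refine ⟨x + w, hx, ?_⟩
    rwa [← hx, add_sub_cancel_left]
  · rintro ⟨z, rfl, hz⟩
    exact ⟨_, hprox_opt z, hz⟩

/-- A point x* ∈ ℝⁿ is a stationary point of ψ = f + φ
(i.e. 0 ∈ ∂ψ(x*) = {∇f(x*)} + ∂φ(x*)) if and only if there exists z* with
x* = prox_φ^Λ(z*) and F_nor^Λ(z*) = 0, where
F_nor^Λ(z) = ∇f(prox_φ^Λ(z)) + Λ(z − prox_φ^Λ(z)). -/
theorem stationary_iff_normal_map_zero {n : ℕ}
    (f φ : EuclideanSpace ℝ (Fin n) → ℝ)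
    (hf : ContDiff ℝ 1 f) (hφ : ConvexOn ℝ Set.univ φ)
    (Λ : Matrix (Fin n) (Fin n) ℝ) (hΛsym : Λ.IsSymm) (hΛ : Λ.PosDef)
    (prox : EuclideanSpace ℝ (Fin n) → EuclideanSpace ℝ (Fin n))
    (hprox : ∀ z y, φ (prox z) +
        (1 / 2) * ⟪prox z - z, Matrix.toEuclideanLin Λ (prox z - z)⟫ ≤
      φ y + (1 / 2) * ⟪y - z, Matrix.toEuclideanLin Λ (y - z)⟫)
    (x : EuclideanSpace ℝ (Fin n)) :
    (0 : EuclideanSpace ℝ (Fin n)) ∈ (fun v => gradient f x + v) '' subdiff φ x ↔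
      ∃ z, x = prox z ∧
        gradient f (prox z) + Matrix.toEuclideanLin Λ (z - prox z) = 0 :=
  stationary_iff_normal_map_zero_general f φ hφ Λ hΛ prox hprox x
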